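/- arXiv:2005.02260 — 8 statements merged into one kernel-verified Lean document; each statement's English description precedes it below -/
import Mathlib

section
/- Let A be an m×m real matrix and F_A(x) = x + (Ax)^3. Suppose x_n is a sequence in ℝ^m with ‖x_n‖ → ∞, F_A(x_n) → α, and x_n/‖x_n‖ → x_∞. Then for every t ∈ ℝ, α - 2t·x_∞ ∈ S_{F_A}; in particular the whole line α + ℝx_∞ is contained in S_{F_A}. -/
open Filter Matrix

theorem stmt2 {m : ℕ} (A : Matrix (Fin m) (Fin m) ℝ) (x : ℕ → Fin m → ℝ)
    (α x_inf : Fin m → ℝ)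
    (h1 : Tendsto (fun n => ‖x n‖) atTop atTop)
    (h2 : Tendsto (fun n => x n + fun i => (A.mulVec (x n) i) ^ 3) atTop (nhds α))
    (h3 : Tendsto (fun n => (‖x n‖)⁻¹ • x n) atTop (nhds x_inf)) :
    ∀ t : ℝ, ∃ y : ℕ → Fin m → ℝ,
      Tendsto (fun n => ‖y n‖) atTop atTop ∧
      Tendsto (fun n => y n + fun i => (A.mulVec (y n) i) ^ 3) atTop
        (nhds (α - (2 * t) • x_inf)) := by
  intro t
  set s : ℕ → ℝ := fun n => t * ‖x n‖⁻¹ with hs_def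
  have hinv : Tendsto (fun n => ‖x n‖⁻¹) atTop (nhds 0) := tendsto_inv_atTop_zero.comp h1
  have hs0 : Tendsto s atTop (nhds 0) := by
    simpa using hinv.const_mul t
  refine ⟨fun n => (1 + s n) • x n, ?_, ?_⟩
  · have hev : ∀ᶠ n in atTop, (1/2 : ℝ) * ‖x n‖ ≤ ‖(1 + s n) • x n‖ := by
      have hsmall : ∀ᶠ n in atTop, |s n| < 1/2 := by
        have := Metric.tendsto_nhds.mp hs0 (1/2) (by norm_num)
        simpa [Real.dist_eq] using this
      filter_upwards [hsmall] with n hn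
      rw [norm_smul, Real.norm_eq_abs]
      have habs : (1/2 : ℝ) ≤ |1 + s n| := by
        have h := abs_add_le (1 + s n) (-s n)
        simp only [add_neg_cancel_right, abs_neg, abs_one] at h
        linarith
      exact mul_le_mul_of_nonneg_right habs (norm_nonneg _)
    exact tendsto_atTop_mono' _ hev (h1.const_mul_atTop (by norm_num))
  · have key : (fun n => ((1 + s n) • x n) + fun i => (A.mulVec ((1 + s n) • x n) i) ^ 3)
        = fun n => ((1 + s n) ^ 3) • (x n + fun i => (A.mulVec (x n) i) ^ 3)
            + (-((1 + s n) * (2 + s n))) • (s n • x n) := by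
      funext n
      funext i
      simp only [Pi.add_apply, Pi.smul_apply, Matrix.mulVec_smul, smul_eq_mul]
      ring
    have hc : Tendsto (fun n => (1 + s n) ^ 3) atTop (nhds 1) := by
      have := (hs0.const_add 1).pow 3
      simpa using this
    have hcoef : Tendsto (fun n => -((1 + s n) * (2 + s n))) atTop (nhds (-2)) := by
      have := ((hs0.const_add 1).mul (hs0.const_add 2)).neg
      simpa using this
    have hsx : Tendsto (fun n => s n • x n) atTop (nhds (t • x_inf)) := by
      have heq : (fun n => s n • x n) = fun n => t • (‖x n‖⁻¹ • x n) := by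
        funext n
        rw [smul_smul]
      rw [heq]
      exact h3.const_smul t
    have hfin := (hc.smul h2).add (hcoef.smul hsx)
    have heq2 : α - (2 * t) • x_inf = (1 : ℝ) • α + (-2 : ℝ) • (t • x_inf) := by
      module
    rw [key, heq2]
    exact hfin
end

section
/- Let A be an m×m real matrix. The map F_A(x) = x + (Ax)^3 is non-proper if and only if there is a sequence y_n ∈ Im(Aᵀ) with ‖y_n‖ → ∞ such that Ay_n + A((Ay_n)^3) is bounded. -/
/-!
Write `F_A = druzkowskiMap A` and `x = y + w` with `y ∈ Im(Aᵀ)` and `w ∈ Ker(A)`. Then `Ax = Ay`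
and `F_A(x) = F_A(y) + w`, so `A F_A(x) = A F_A(y) = Ay + A((Ay)^3)`. If `‖x_n‖ → ∞` with `F_A(x_n)` bounded, then
`‖x_n‖ ≤ ‖F_A(x_n)‖ + ‖Ay_n‖^3` forces `‖y_n‖ → ∞`. Conversely, removing from `y_n` the kernel
component of `(Ay_n)^3` gives `x_n` with `F_A(x_n) ∈ Im(Aᵀ)`; since `A` is injective on `Im(Aᵀ)`,
`‖F_A(x_n)‖` is controlled by `‖A F_A(y_n)‖`, and `‖y_n‖` by `‖A x_n‖`.
-/

open Filter Matrix Bornology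

theorem Filter.Tendsto.atTop_of_pow {α R : Type*} [Semiring R] [LinearOrder R]
    [IsStrictOrderedRing R] {l : Filter α} {f : α → R} (hf : ∀ x, 0 ≤ f x) {n : ℕ} (hn : n ≠ 0)
    (h : Tendsto (fun x => f x ^ n) l atTop) : Tendsto f l atTop :=
  tendsto_atTop.2 fun b => (tendsto_atTop.1 h (b ^ n)).mono fun x hx =>
    (le_total b 0).elim (fun hb => hb.trans (hf x)) fun _ => le_of_pow_le_pow_left₀ hn (hf x) hx

theorem not_forall_isCompact_preimage_iff_exists_seq {E F : Type*} [NormedAddCommGroup E]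
    [NormedAddCommGroup F] [ProperSpace E] [ProperSpace F] {f : E → F} (hf : Continuous f) :
    (¬ ∀ K : Set F, IsCompact K → IsCompact (f ⁻¹' K)) ↔
      ∃ x : ℕ → E, Tendsto (fun n => ‖x n‖) atTop atTop ∧ ∃ C, ∀ n, ‖f (x n)‖ ≤ C := by
  constructor
  · intro h
    push Not at h
    obtain ⟨K, hK, hpre⟩ := h
    obtain ⟨C, hC⟩ := isBounded_iff_forall_norm_le.1 hK.isBounded
    have hunbounded : ¬ IsBounded (f ⁻¹' K) := fun hb =>
      hpre (Metric.isCompact_of_isClosed_isBounded (hK.isClosed.preimage hf) hb)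
    simp only [isBounded_iff_forall_norm_le, not_exists, not_forall, not_le] at hunbounded
    choose x hxK hx using fun n : ℕ => hunbounded n
    exact ⟨x, tendsto_atTop_mono (fun n => (hx n).le) tendsto_natCast_atTop_atTop,
      C, fun n => hC _ (hxK n)⟩
  · rintro ⟨x, hx, C, hC⟩ h
    obtain ⟨M, hM⟩ :=
      isBounded_iff_forall_norm_le.1 (h _ (isCompact_closedBall (0 : F) C)).isBounded
    obtain ⟨n, hn⟩ := (hx.eventually_gt_atTop M).exists
    exact hn.not_ge (hM _ (by simpa using hC n))

theorem LinearMap.exists_norm_le_mul_norm_apply_of_disjoint_ker {𝕜 E F : Type*}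
    [NontriviallyNormedField 𝕜] [CompleteSpace 𝕜] [NormedAddCommGroup E] [NormedSpace 𝕜 E]
    [FiniteDimensional 𝕜 E] [NormedAddCommGroup F] [NormedSpace 𝕜 F] (f : E →ₗ[𝕜] F)
    {S : Submodule 𝕜 E} (hS : Disjoint S (LinearMap.ker f)) :
    ∃ c > 0, ∀ v ∈ S, ‖v‖ ≤ c * ‖f v‖ := by
  have hker : LinearMap.ker (f.domRestrict S) = ⊥ := by
    rwa [LinearMap.ker_domRestrict, ← Submodule.disjoint_iff_comap_eq_bot]
  obtain ⟨K, hK, hf⟩ := (f.domRestrict S).exists_antilipschitzWith hker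
  exact ⟨K, hK, fun v hv => hf.le_mul_norm (map_zero _) ⟨v, hv⟩⟩

theorem Matrix.mulVec_eq_of_sub_mem_ker {R m n : Type*} [CommRing R] [Fintype n]
    (A : Matrix m n R) {x y : n → R} (h : x - y ∈ LinearMap.ker A.mulVecLin) :
    A *ᵥ x = A *ᵥ y := by
  rwa [LinearMap.mem_ker, mulVecLin_apply, mulVec_sub, sub_eq_zero] at h

namespace Matrix

variable {R : Type*} [Field R] [LinearOrder R] [IsStrictOrderedRing R] {m n : Type*}
  [Fintype m] [Fintype n]

theorem isCompl_ker_mulVecLin_range_mulVecLin_transpose (A : Matrix m n R) :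
    IsCompl (LinearMap.ker A.mulVecLin) (LinearMap.range Aᵀ.mulVecLin) := by
  have hdisj : Disjoint (LinearMap.ker A.mulVecLin) (LinearMap.range Aᵀ.mulVecLin) := by
    rw [Submodule.disjoint_def]
    rintro _ hx ⟨u, rfl⟩
    have hu : u ∈ LinearMap.ker (Aᵀᵀ * Aᵀ).mulVecLin := by
      simpa [LinearMap.mem_ker, ← mulVec_mulVec] using hx
    rwa [ker_mulVecLin_transpose_mul_self] at hu
  refine (Submodule.isCompl_iff_disjoint _ _ ?_).2 hdisj
  have := LinearMap.finrank_range_add_finrank_ker A.mulVecLin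
  have hrank : Module.finrank R (LinearMap.range Aᵀ.mulVecLin) = A.rank := rank_transpose A
  rw [← this, hrank, rank, add_comm]

theorem exists_mem_range_transpose_sub_mem_ker (A : Matrix m n R) (x : n → R) :
    ∃ y ∈ LinearMap.range Aᵀ.mulVecLin, x - y ∈ LinearMap.ker A.mulVecLin := by
  obtain ⟨k, y, hk, hy, rfl⟩ := Submodule.codisjoint_iff_exists_add_eq.1
    A.isCompl_ker_mulVecLin_range_mulVecLin_transpose.codisjoint x
  exact ⟨y, hy, by rwa [add_sub_cancel_right]⟩

end Matrix

section DruzkowskiMap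

variable {ι : Type*} [Fintype ι] (A : Matrix ι ι ℝ)

def druzkowskiMap (x : ι → ℝ) : ι → ℝ := x + (A *ᵥ x) ^ 3

theorem continuous_druzkowskiMap : Continuous (druzkowskiMap A) :=
  continuous_id.add ((A.mulVecLin.continuous_of_finiteDimensional).pow 3)

theorem druzkowskiMap_eq_add_of_sub_mem_ker {x y : ι → ℝ}
    (h : x - y ∈ LinearMap.ker A.mulVecLin) :
    druzkowskiMap A x = druzkowskiMap A y + (x - y) := by
  rw [druzkowskiMap, druzkowskiMap, A.mulVec_eq_of_sub_mem_ker h]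
  abel

theorem mulVec_druzkowskiMap_eq_of_sub_mem_ker {x y : ι → ℝ}
    (h : x - y ∈ LinearMap.ker A.mulVecLin) :
    A *ᵥ druzkowskiMap A x = A *ᵥ druzkowskiMap A y := by
  refine A.mulVec_eq_of_sub_mem_ker ?_
  rw [druzkowskiMap_eq_add_of_sub_mem_ker A h, add_sub_cancel_left]
  exact h

theorem norm_le_norm_druzkowskiMap_add (x : ι → ℝ) :
    ‖x‖ ≤ ‖druzkowskiMap A x‖ + ‖A *ᵥ x‖ ^ 3 :=
  calc ‖x‖ = ‖druzkowskiMap A x - (A *ᵥ x) ^ 3‖ := by rw [druzkowskiMap, add_sub_cancel_right]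
    _ ≤ ‖druzkowskiMap A x‖ + ‖(A *ᵥ x) ^ 3‖ := norm_sub_le _ _
    _ ≤ ‖druzkowskiMap A x‖ + ‖A *ᵥ x‖ ^ 3 := by gcongr; exact norm_pow_le' _ three_pos

theorem exists_seq_range_transpose_of_tendsto {x : ℕ → ι → ℝ}
    (hx : Tendsto (fun n => ‖x n‖) atTop atTop) {C : ℝ}
    (hC : ∀ n, ‖druzkowskiMap A (x n)‖ ≤ C) :
    ∃ y : ℕ → ι → ℝ, (∀ n, y n ∈ LinearMap.range Aᵀ.mulVecLin) ∧
      Tendsto (fun n => ‖y n‖) atTop atTop ∧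
      ∃ C, ∀ n, ‖A *ᵥ druzkowskiMap A (y n)‖ ≤ C := by
  choose y hy hxy using fun n => A.exists_mem_range_transpose_sub_mem_ker (x n)
  obtain ⟨a, ha, hA⟩ := (LinearMap.toContinuousLinearMap A.mulVecLin).bound
  have hbound (n : ℕ) : ‖x n‖ ≤ C + a ^ 3 * ‖y n‖ ^ 3 :=
    calc ‖x n‖ ≤ ‖druzkowskiMap A (x n)‖ + ‖A *ᵥ y n‖ ^ 3 := by
          rw [← A.mulVec_eq_of_sub_mem_ker (hxy n)]
          exact norm_le_norm_druzkowskiMap_add A (x n)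
      _ ≤ C + (a * ‖y n‖) ^ 3 := by gcongr; exacts [hC n, hA (y n)]
      _ = C + a ^ 3 * ‖y n‖ ^ 3 := by ring
  refine ⟨y, hy, ?_, a * C, fun n => ?_⟩
  · exact (((tendsto_atTop_mono hbound hx).atTop_of_const_add C).atTop_of_const_mul₀
      (pow_pos ha 3)).atTop_of_pow (fun n => norm_nonneg _) three_ne_zero
  · rw [← mulVec_druzkowskiMap_eq_of_sub_mem_ker A (hxy n)]
    exact (hA _).trans (by gcongr; exact hC n)

theorem exists_seq_tendsto_of_range_transpose {y : ℕ → ι → ℝ}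
    (hy : ∀ n, y n ∈ LinearMap.range Aᵀ.mulVecLin) (hty : Tendsto (fun n => ‖y n‖) atTop atTop)
    {C : ℝ} (hC : ∀ n, ‖A *ᵥ druzkowskiMap A (y n)‖ ≤ C) :
    ∃ x : ℕ → ι → ℝ, Tendsto (fun n => ‖x n‖) atTop atTop ∧
      ∃ C, ∀ n, ‖druzkowskiMap A (x n)‖ ≤ C := by
  choose r hr hk using fun n => A.exists_mem_range_transpose_sub_mem_ker ((A *ᵥ y n) ^ 3)
  obtain ⟨c, hc, hinj⟩ := A.mulVecLin.exists_norm_le_mul_norm_apply_of_disjoint_ker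
    A.isCompl_ker_mulVecLin_range_mulVecLin_transpose.symm.disjoint
  obtain ⟨a, ha, hA⟩ := (LinearMap.toContinuousLinearMap A.mulVecLin).bound
  set x : ℕ → ι → ℝ := fun n => y n - ((A *ᵥ y n) ^ 3 - r n)
  have hxy (n : ℕ) : x n - y n ∈ LinearMap.ker A.mulVecLin := by
    simpa [x] using neg_mem (hk n)
  have hFx (n : ℕ) : druzkowskiMap A (x n) = y n + r n := by
    rw [druzkowskiMap_eq_add_of_sub_mem_ker A (hxy n), druzkowskiMap]
    simp only [x]
    abel
  have hyx (n : ℕ) : ‖y n‖ ≤ c * a * ‖x n‖ :=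
    calc ‖y n‖ ≤ c * ‖A *ᵥ y n‖ := hinj _ (hy n)
      _ = c * ‖A *ᵥ x n‖ := by rw [A.mulVec_eq_of_sub_mem_ker (hxy n)]
      _ ≤ c * (a * ‖x n‖) := by gcongr; exact hA (x n)
      _ = c * a * ‖x n‖ := by ring
  refine ⟨x, (tendsto_atTop_mono hyx hty).atTop_of_const_mul₀ (by positivity), c * C, fun n => ?_⟩
  calc ‖druzkowskiMap A (x n)‖ ≤ c * ‖A *ᵥ druzkowskiMap A (x n)‖ :=
        hinj _ (by rw [hFx]; exact add_mem (hy n) (hr n))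
    _ ≤ c * C := by
        rw [mulVec_druzkowskiMap_eq_of_sub_mem_ker A (hxy n)]
        gcongr
        exact hC n

end DruzkowskiMap

theorem stmt3 {m : ℕ} (A : Matrix (Fin m) (Fin m) ℝ) :
    (¬ ∀ K : Set (Fin m → ℝ), IsCompact K →
        IsCompact ((fun x => x + fun i => (A.mulVec x i) ^ 3) ⁻¹' K)) ↔
    ∃ y : ℕ → Fin m → ℝ,
      (∀ n, y n ∈ LinearMap.range (Matrix.mulVecLin Aᵀ)) ∧
      Tendsto (fun n => ‖y n‖) atTop atTop ∧
      ∃ C : ℝ, ∀ n,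
        ‖A.mulVec (y n) + A.mulVec (fun i => (A.mulVec (y n) i) ^ 3)‖ ≤ C := by
  simp only [← mulVec_add]
  refine (not_forall_isCompact_preimage_iff_exists_seq (continuous_druzkowskiMap A)).trans ⟨?_, ?_⟩
  · rintro ⟨x, hx, C, hC⟩
    exact exists_seq_range_transpose_of_tendsto A hx hC
  · rintro ⟨y, hy, hty, C, hC⟩
    exact exists_seq_tendsto_of_range_transpose A hy hty hC
end

section
/- Every Druzkowski matrix A belongs to the class 𝒵: for every λ ∈ ℝ, the only solution of x + λ(Ax)^3 = 0 is x = 0. -/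
/-!
Write `N x = Δ[(Ax)²]·A`, so that the Jacobian of `F_A` at `x` is `1 + 3 N x` and
`x + λ (Ax)³ = (1 + λ N x) x`. Since `N (t x) = t² N x`, the Druzkowski condition at the points
`t x` gives `det (1 + s N x) = 1` for every `s ≥ 0`. This is a polynomial identity in `s`, hence it
holds for `s = λ` as well, and then `1 + λ N x` is invertible and kills `x`.
-/

open Matrix Polynomial

section

variable {n R : Type*} [Fintype n] [DecidableEq n] [CommRing R]

lemma eval_det_one_add_X_smul (M : Matrix n n R) (s : R) :
    (det (1 + (X : R[X]) • M.map C)).eval s = det (1 + s • M) := by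
  rw [← coe_evalRingHom, RingHom.map_det]
  congr 1
  ext i j
  rcases eq_or_ne i j with rfl | hij <;> simp [one_apply, *] <;> ring

lemma det_one_add_smul_eq_one_of_infinite [IsDomain R] {M : Matrix n n R} {S : Set R}
    (hS : S.Infinite) (hM : ∀ s ∈ S, det (1 + s • M) = 1) (s : R) :
    det (1 + s • M) = 1 := by
  have hpoly : det (1 + (X : R[X]) • M.map C) = C 1 :=
    eq_of_infinite_eval_eq _ _ <| hS.mono fun t ht => by
      simp [eval_det_one_add_X_smul, hM t ht]
  simpa using (eval_det_one_add_X_smul M s).symm.trans (congrArg (eval s) hpoly)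

def sqDiagMul (A : Matrix n n R) (x : n → R) : Matrix n n R :=
  diagonal ((A *ᵥ x) ^ 2) * A

lemma sqDiagMul_smul (A : Matrix n n R) (t : R) (x : n → R) :
    sqDiagMul A (t • x) = t ^ 2 • sqDiagMul A x := by
  rw [sqDiagMul, sqDiagMul, mulVec_smul, _root_.smul_pow, diagonal_smul, smul_mul]

lemma sqDiagMul_mulVec_self (A : Matrix n n R) (x : n → R) :
    sqDiagMul A x *ᵥ x = (A *ᵥ x) ^ 3 := by
  ext i
  simp [sqDiagMul, ← mulVec_mulVec, mulVec_diagonal, pow_succ]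

end

section

variable {n 𝕜 : Type*} [Fintype n] [DecidableEq n] [NontriviallyNormedField 𝕜]
  [CompleteSpace 𝕜]

lemma hasFDerivAt_add_cube_mulVec (A : Matrix n n 𝕜) (x : n → 𝕜) :
    HasFDerivAt (fun y : n → 𝕜 => y + fun i => (A *ᵥ y) i ^ 3)
      (LinearMap.toContinuousLinearMap (toLin' (1 + (3 : 𝕜) • sqDiagMul A x))) x := by
  let f := LinearMap.toContinuousLinearMap (toLin' A)
  refine ((hasFDerivAt_id x).add (f.hasFDerivAt.pow 3)).congr_fderiv ?_
  ext v i
  simp [f, sqDiagMul, ← mulVec_mulVec, mulVec_diagonal, -toLin'_mul]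
  ring

lemma det_fderiv_add_cube_mulVec (A : Matrix n n 𝕜) (x : n → 𝕜) :
    LinearMap.det (fderiv 𝕜 (fun y : n → 𝕜 => y + fun i => (A *ᵥ y) i ^ 3) x
      : (n → 𝕜) →ₗ[𝕜] (n → 𝕜)) = det (1 + (3 : 𝕜) • sqDiagMul A x) := by
  rw [(hasFDerivAt_add_cube_mulVec A x).fderiv, LinearMap.coe_toContinuousLinearMap,
    LinearMap.det_toLin']

end

theorem stmt6 {m : ℕ} (A : Matrix (Fin m) (Fin m) ℝ)
    (hDruz : ∀ x : Fin m → ℝ,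
      LinearMap.det (fderiv ℝ (fun y : Fin m → ℝ => y + fun i => (A.mulVec y i) ^ 3) x
        : (Fin m → ℝ) →ₗ[ℝ] (Fin m → ℝ)) = 1) :
    ∀ (lam : ℝ) (x : Fin m → ℝ),
      x + (fun i => lam * (A.mulVec x i) ^ 3) = 0 → x = 0 := by
  intro lam x hx
  have hnonneg : ∀ s ∈ Set.Ici (0 : ℝ), det (1 + s • sqDiagMul A x) = 1 := by
    intro s hs
    have h := hDruz (√(s / 3) • x)
    rwa [det_fderiv_add_cube_mulVec, sqDiagMul_smul, smul_smul, mul_comm,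
      Real.sq_sqrt (div_nonneg hs zero_le_three), div_mul_cancel₀ s three_ne_zero] at h
  have hdet := det_one_add_smul_eq_one_of_infinite (Set.Ici_infinite 0) hnonneg lam
  have hker : (1 + lam • sqDiagMul A x) *ᵥ x = 0 := by
    rw [add_mulVec, one_mulVec, smul_mulVec, sqDiagMul_mulVec_self, ← hx]
    rfl
  exact eq_zero_of_mulVec_eq_zero (by simp [hdet]) hker
end

section
/- Let A be the 3×3 matrix with rows (1,-5,4), (2,-5,3), (1,-5,4). Define u_n = γ_n·(1,1,1) - (1/(3γ_n))·(1,0,1)/5 for any sequence γ_n → ∞ of positive reals. Then ‖u_n‖ → ∞ and u_n + A(u_n^3) → 0, where u_n^3 is the coordinate-wise cube. -/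
open Filter Matrix

theorem stmt9 (γ : ℕ → ℝ) (hpos : ∀ n, 0 < γ n) (hγ : Tendsto γ atTop atTop)
    (u : ℕ → Fin 3 → ℝ)
    (hu : ∀ n, u n = γ n • ![(1:ℝ), 1, 1] - (1 / (3 * γ n)) • ((1/5 : ℝ) • ![1, 0, 1])) :
    Tendsto (fun n => ‖u n‖) atTop atTop ∧
    Tendsto (fun n => u n +
        (!![(1:ℝ), -5, 4; 2, -5, 3; 1, -5, 4]).mulVec (fun i => (u n i) ^ 3))
      atTop (nhds 0) := by
  have hne : ∀ n, γ n ≠ 0 := fun n => (hpos n).ne'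
  constructor
  · apply tendsto_atTop_mono _ hγ
    intro n
    have h1 : u n 1 = γ n := by
      rw [hu n]; simp
    calc γ n = |γ n| := (abs_of_pos (hpos n)).symm
    _ = ‖u n 1‖ := by rw [h1]; rfl
    _ ≤ ‖u n‖ := norm_le_pi_norm (u n) 1
  · have key : (fun n => u n +
        (!![(1:ℝ), -5, 4; 2, -5, 3; 1, -5, 4]).mulVec (fun i => (u n i) ^ 3))
        = fun n => ((γ n)⁻¹) • ![(0:ℝ), 1/15, 0]
            + (((γ n)⁻¹)^3) • ![(-1/675 : ℝ), -1/675, -1/675] := by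
      funext n
      rw [hu n]
      ext i
      fin_cases i <;>
        simp [mulVec, dotProduct, Fin.sum_univ_three] <;>
        field_simp [hne n] <;> ring
    rw [key]
    have t : Tendsto (fun n => (γ n)⁻¹) atTop (nhds 0) := hγ.inv_tendsto_atTop
    have h1 := t.smul_const (![(0:ℝ), 1/15, 0])
    have h2 := (t.pow 3).smul_const (![(-1/675 : ℝ), -1/675, -1/675])
    rw [zero_smul] at h1
    have : ((0:ℝ)^3) = 0 := by norm_num
    rw [this, zero_smul] at h2
    simpa using h1.add h2
end

section
/- Let A be the 3×3 matrix with rows (1,-5,4), (2,-5,3), (1,-5,4). Then A belongs to the class 𝒵: for every λ ∈ ℝ, the equation x + λ(Ax)^3 = 0 has only the solution x = 0. -/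
open Matrix

theorem stmt10 :
    ∀ (lam : ℝ) (x : Fin 3 → ℝ),
      x + (fun i => lam * ((!![(1:ℝ), -5, 4; 2, -5, 3; 1, -5, 4]).mulVec x i) ^ 3) = 0 →
      x = 0 := by
  intro lam x h
  have h0 := congrFun h 0
  have h1 := congrFun h 1
  have h2 := congrFun h 2
  simp [Matrix.mulVec, dotProduct, Fin.sum_univ_three] at h0 h1 h2
  have hx02 : x 0 = x 2 := by linarith
  rw [hx02] at h0 h1
  ring_nf at h0 h1
  have hx12 : x 1 = x 2 := by linarith
  rw [hx12] at h0
  have : x 2 = 0 := by nlinarith [h0]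
  funext i
  fin_cases i <;> simp [hx02, hx12, this]
end

section
/- Let A be the 3×3 matrix with rows (1,-5,4), (2,-5,3), (1,-5,4). Then A ∈ 𝒵 but the map F_A(x) = x + (Ax)^3 : ℝ³ → ℝ³ is not proper. Hence the claim 'for every A ∈ 𝒵, F_A is proper' is false. -/
/-!
If `x + λ (A x)³ = 0`, then `x i = x j` whenever `(A x) i = (A x) j`. For this `A` the first and
last rows coincide, which gives `x 0 = x 2`, and then `(A x) 0 = (A x) 1`, so `x` is constant; the
rows of `A` sum to zero, so `A x = 0` and `x = 0`.

Non-properness comes from the kernel direction `(1, 1, 1)`: moving `s³` along it and correcting by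
terms of order `s` and `1 / s` keeps `x + (A x)³` of order `1 / s` while `‖x‖ → ∞`.
-/

open Matrix Filter Topology

section Cubic

variable {n R : Type*} [Fintype n] [CommRing R] {A : Matrix n n R} {lam : R} {x : n → R}

theorem eq_of_add_cube_mulVec_eq_zero (h : x + (fun i => lam * (A *ᵥ x) i ^ 3) = 0) {i j : n}
    (hij : (A *ᵥ x) i = (A *ᵥ x) j) : x i = x j := by
  have hi := congrFun h i
  have hj := congrFun h j
  simp only [Pi.add_apply, Pi.zero_apply, hij] at hi hj
  linear_combination hi - hj

theorem eq_zero_of_add_cube_mulVec_eq_zero (h : x + (fun i => lam * (A *ᵥ x) i ^ 3) = 0)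
    (hx : A *ᵥ x = 0) : x = 0 := by
  simpa [hx, ← Pi.zero_def] using h

end Cubic

theorem not_forall_isCompact_preimage_of_tendsto {α E F : Type*} [SeminormedAddCommGroup E]
    [TopologicalSpace F] [WeaklyLocallyCompactSpace F] {l : Filter α} [l.NeBot] {f : E → F}
    {u : α → E} {y : F} (hfu : Tendsto (f ∘ u) l (𝓝 y)) (hu : Tendsto (‖u ·‖) l atTop) :
    ¬ ∀ K : Set F, IsCompact K → IsCompact (f ⁻¹' K) := by
  intro hf
  obtain ⟨K, hK, hKy⟩ := exists_compact_mem_nhds y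
  obtain ⟨C, hC⟩ := isBounded_iff_forall_norm_le.1 (hf K hK).isBounded
  obtain ⟨a, haK, haC⟩ := ((hfu.eventually_mem hKy).and (hu.eventually_gt_atTop C)).exists
  exact (hC (u a) haK).not_gt haC

def counterexampleMatrix : Matrix (Fin 3) (Fin 3) ℝ := !![1, -5, 4; 2, -5, 3; 1, -5, 4]

local notation "A₀" => counterexampleMatrix

theorem counterexampleMatrix_mulVec_apply (x : Fin 3 → ℝ) :
    A₀ *ᵥ x = ![x 0 - 5 * x 1 + 4 * x 2, 2 * x 0 - 5 * x 1 + 3 * x 2, x 0 - 5 * x 1 + 4 * x 2] := by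
  ext i
  fin_cases i <;> simp [counterexampleMatrix, mulVec, dotProduct, Fin.sum_univ_three] <;> ring

theorem counterexampleMatrix_mulVec_const (c : ℝ) : A₀ *ᵥ (fun _ => c) = 0 := by
  ext i
  fin_cases i <;> simp [counterexampleMatrix_mulVec_apply] <;> ring

theorem eq_zero_of_add_cube_counterexampleMatrix_mulVec_eq_zero {lam : ℝ} {x : Fin 3 → ℝ}
    (h : x + (fun i => lam * (A₀ *ᵥ x) i ^ 3) = 0) : x = 0 := by
  have h02 : x 0 = x 2 :=
    eq_of_add_cube_mulVec_eq_zero h (by simp [counterexampleMatrix_mulVec_apply])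
  have h01 : x 0 = x 1 :=
    eq_of_add_cube_mulVec_eq_zero h (by simp [counterexampleMatrix_mulVec_apply]; linarith)
  have hconst : x = fun _ => x 0 := by
    ext i
    fin_cases i <;> simp [← h01, ← h02]
  refine eq_zero_of_add_cube_mulVec_eq_zero h ?_
  rw [hconst]
  exact counterexampleMatrix_mulVec_const _

/-- Chosen so that `A₀ (escapingCurve s) = -(s, s + 1 / (15 s), s)`, whose cubes cancel `s³ (1, 1, 1)`
and the `s / 5` in the middle coordinate, leaving only terms of order `1 / s`. -/
noncomputable def escapingCurve (s : ℝ) : Fin 3 → ℝ :=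
  ![s ^ 3 - 1 / (15 * s), s ^ 3 + s / 5 - 1 / (75 * s), s ^ 3]

theorem add_cube_counterexampleMatrix_mulVec_escapingCurve {s : ℝ} (hs : s ≠ 0) :
    escapingCurve s + (fun i => (A₀ *ᵥ escapingCurve s) i ^ 3)
      = ![-1 / (15 * s), -2 / (75 * s) - 1 / (3375 * s ^ 3), 0] := by
  ext i
  fin_cases i <;> simp [escapingCurve, counterexampleMatrix_mulVec_apply] <;> field_simp <;> ring

theorem tendsto_add_cube_counterexampleMatrix_mulVec_escapingCurve :
    Tendsto (fun s => escapingCurve s + (fun i => (A₀ *ᵥ escapingCurve s) i ^ 3)) atTop (𝓝 0) := by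
  have hinv : Tendsto (fun s : ℝ => s⁻¹) atTop (𝓝 0) := tendsto_inv_atTop_zero
  have hlim : Tendsto (fun s : ℝ => ![-(1 / 15) * s⁻¹, -(2 / 75) * s⁻¹ - 1 / 3375 * s⁻¹ ^ 3, 0])
      atTop (𝓝 0) := by
    rw [tendsto_pi_nhds]
    intro i
    fin_cases i
    · convert hinv.const_mul (-(1 / 15)) using 2 <;> simp
    · convert (hinv.const_mul (-(2 / 75))).sub ((hinv.pow 3).const_mul (1 / 3375)) using 2 <;> simp
    · simp
  refine hlim.congr' ?_
  filter_upwards [eventually_ne_atTop 0] with s hs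
  rw [add_cube_counterexampleMatrix_mulVec_escapingCurve hs]
  ext i
  fin_cases i <;> simp <;> ring

theorem tendsto_norm_escapingCurve : Tendsto (‖escapingCurve ·‖) atTop atTop := by
  refine tendsto_atTop_mono' _ ?_ (tendsto_pow_atTop (n := 3) (by norm_num))
  filter_upwards [eventually_ge_atTop 0] with s hs
  calc s ^ 3 = ‖escapingCurve s 2‖ := by
        simp [escapingCurve, abs_of_nonneg hs]
    _ ≤ ‖escapingCurve s‖ := norm_le_pi_norm _ 2

theorem stmt11 :
    (∀ (lam : ℝ) (x : Fin 3 → ℝ),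
      x + (fun i => lam * ((!![(1:ℝ), -5, 4; 2, -5, 3; 1, -5, 4]).mulVec x i) ^ 3) = 0 →
      x = 0) ∧
    ¬ ∀ K : Set (Fin 3 → ℝ), IsCompact K →
        IsCompact ((fun x => x +
          fun i => ((!![(1:ℝ), -5, 4; 2, -5, 3; 1, -5, 4]).mulVec x i) ^ 3) ⁻¹' K) :=
  ⟨fun _ _ h => eq_zero_of_add_cube_counterexampleMatrix_mulVec_eq_zero h,
    not_forall_isCompact_preimage_of_tendsto
      tendsto_add_cube_counterexampleMatrix_mulVec_escapingCurve tendsto_norm_escapingCurve⟩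
end

section
/- Let f : ℝ^m → ℝ^k be a polynomial map with k ≥ m, f(0) = 0, and Df(0) of rank m with the top m×m minor invertible. Define F : ℝ^m → ℝ^m by F = (f₁, …, f_{m-1}, f_m + f_m² + f_{m+1}² + ⋯ + f_k²). Then f is proper if and only if F is proper. -/
/-!
Both maps are continuous, so properness passes from one to the other as soon as a bound on one
of `‖f x‖`, `‖F x‖` bounds the other. The bound `‖F x‖ ≤ ‖f x‖ + k ‖f x‖²` is immediate.
Conversely, with `S = f_m² + ⋯ + f_k²`, the last coordinate of `F` is `f_m + S ≥ f_m + f_m²`,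
so a bound on it bounds `f_m` from below, hence `S` from above, and thus `f_m, …, f_k`.
-/

open Filter Matrix

theorem isCompact_preimage_of_norm_control {X Y Z : Type*} [TopologicalSpace X]
    [NormedAddCommGroup Y] [SeminormedAddCommGroup Z] [ProperSpace Z] {f : X → Y} {g : X → Z}
    (hf : Continuous f) (hg : ∀ K : Set Z, IsCompact K → IsCompact (g ⁻¹' K))
    (hfg : ∀ C : ℝ, ∃ D : ℝ, ∀ x, ‖f x‖ ≤ C → ‖g x‖ ≤ D) (K : Set Y) (hK : IsCompact K) :
    IsCompact (f ⁻¹' K) := by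
  obtain ⟨C, hC⟩ := hK.isBounded.exists_norm_le
  obtain ⟨D, hD⟩ := hfg C
  refine (hg _ (isCompact_closedBall 0 D)).of_isClosed_subset (hK.isClosed.preimage hf) ?_
  intro x hx
  simpa using hD x (hC _ hx)

theorem le_two_mul_add_one_of_sq_le_of_add_le {t s c : ℝ} (hts : t ^ 2 ≤ s) (hc : t + s ≤ c) :
    s ≤ 2 * c + 1 := by
  nlinarith [sq_nonneg (t + 1)]

/-- `tailSquares m y = y_m² + ⋯ + y_k²` in the `1`-based indexing of the paper
(the `Fin k` index `j` is the paper's `j + 1`). -/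
noncomputable def tailSquares (m : ℕ) {k : ℕ} (y : Fin k → ℝ) : ℝ :=
  ∑ j : Fin k, (if m ≤ (j : ℕ) + 1 then (y j) ^ 2 else 0)

noncomputable def addTailSquares {m k : ℕ} (hkm : m ≤ k) (y : Fin k → ℝ) : Fin m → ℝ :=
  fun i => if (i : ℕ) + 1 < m then y (Fin.castLE hkm i)
    else y (Fin.castLE hkm i) + tailSquares m y

section TailSquares

variable {m k : ℕ}

theorem continuous_tailSquares : Continuous (tailSquares (k := k) m) :=
  continuous_finsetSum _ fun j _ => by split_ifs <;> fun_prop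

theorem tailSquares_nonneg (y : Fin k → ℝ) : 0 ≤ tailSquares m y :=
  Finset.sum_nonneg fun j _ => by split_ifs <;> positivity

theorem sq_le_tailSquares (y : Fin k → ℝ) {j : Fin k} (hj : m ≤ (j : ℕ) + 1) :
    y j ^ 2 ≤ tailSquares m y := by
  refine le_of_eq_of_le (if_pos hj).symm (Finset.single_le_sum (f := fun j : Fin k =>
    if m ≤ (j : ℕ) + 1 then (y j) ^ 2 else 0) (fun j _ => ?_) (Finset.mem_univ j))
  split_ifs <;> positivity

theorem tailSquares_le (y : Fin k → ℝ) : tailSquares m y ≤ k * ‖y‖ ^ 2 := by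
  calc tailSquares m y ≤ ∑ _j : Fin k, ‖y‖ ^ 2 := by
        refine Finset.sum_le_sum fun j _ => ?_
        split_ifs
        · simpa [Real.norm_eq_abs, sq_abs] using
            pow_le_pow_left₀ (norm_nonneg _) (norm_le_pi_norm y j) 2
        · positivity
    _ = k * ‖y‖ ^ 2 := by simp

variable (hkm : m ≤ k)

theorem continuous_addTailSquares : Continuous (addTailSquares hkm) := by
  refine continuous_pi fun i => ?_
  simp only [addTailSquares]
  split_ifs
  · fun_prop
  · exact (continuous_apply _).add continuous_tailSquares

theorem norm_addTailSquares_le (y : Fin k → ℝ) :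
    ‖addTailSquares hkm y‖ ≤ ‖y‖ + k * ‖y‖ ^ 2 := by
  refine (pi_norm_le_iff_of_nonneg (by positivity)).2 fun i => ?_
  have hy := norm_le_pi_norm y (Fin.castLE hkm i)
  have hS := tailSquares_le y (m := m)
  simp only [addTailSquares]
  split_ifs
  · nlinarith [sq_nonneg ‖y‖]
  · calc _ ≤ ‖y (Fin.castLE hkm i)‖ + ‖tailSquares m y‖ := norm_add_le _ _
      _ ≤ ‖y‖ + k * ‖y‖ ^ 2 := by rw [Real.norm_of_nonneg (tailSquares_nonneg y)]; gcongr

theorem norm_le_norm_addTailSquares_add_one (hm : 0 < m) (y : Fin k → ℝ) :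
    ‖y‖ ≤ ‖addTailSquares hkm y‖ + 1 := by
  set c := ‖addTailSquares hkm y‖
  have hc : 0 ≤ c := norm_nonneg _
  have hcoord (i : Fin m) : |addTailSquares hkm y i| ≤ c := by
    simpa [Real.norm_eq_abs] using norm_le_pi_norm (addTailSquares hkm y) i
  have hS : tailSquares m y ≤ 2 * c + 1 := by
    let i₀ : Fin m := ⟨m - 1, Nat.sub_lt hm one_pos⟩
    have hlast : m ≤ (Fin.castLE hkm i₀ : ℕ) + 1 := by simp [i₀]; omega
    refine le_two_mul_add_one_of_sq_le_of_add_le (sq_le_tailSquares y hlast) ?_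
    have := (abs_le.1 (hcoord i₀)).2
    rwa [addTailSquares, if_neg (show ¬ (i₀ : ℕ) + 1 < m by simp [i₀]; omega)] at this
  refine (pi_norm_le_iff_of_nonneg (by positivity)).2 fun j => ?_
  rw [Real.norm_eq_abs]
  by_cases hj : m ≤ (j : ℕ) + 1
  · exact abs_le_of_sq_le_sq (by nlinarith [sq_le_tailSquares y hj]) (by positivity)
  · have := hcoord ⟨j, by omega⟩
    rw [addTailSquares, if_pos (show (j : ℕ) + 1 < m by omega)] at this
    exact this.trans (by linarith)

end TailSquares

theorem stmt12_general {m k : ℕ} (hm : 0 < m) (hkm : m ≤ k)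
    (f : (Fin m → ℝ) → (Fin k → ℝ))
    (hpoly : ∃ p : Fin k → MvPolynomial (Fin m) ℝ,
      ∀ x j, f x j = MvPolynomial.eval x (p j))
    (F : (Fin m → ℝ) → (Fin m → ℝ))
    (hF : ∀ x (i : Fin m), F x i =
      if (i : ℕ) + 1 < m then f x (Fin.castLE hkm i)
      else f x (Fin.castLE hkm i) +
        ∑ j : Fin k, (if m ≤ (j : ℕ) + 1 then (f x j) ^ 2 else 0)) :
    (∀ K : Set (Fin k → ℝ), IsCompact K → IsCompact (f ⁻¹' K)) ↔
    (∀ K : Set (Fin m → ℝ), IsCompact K → IsCompact (F ⁻¹' K)) := by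
  obtain ⟨p, hp⟩ := hpoly
  have hf : Continuous f := continuous_pi fun j => by
    simpa only [hp] using (p j).continuous_eval
  have hFf : F = addTailSquares hkm ∘ f := funext fun x => funext (hF x)
  have hFc : Continuous F := hFf ▸ (continuous_addTailSquares hkm).comp hf
  constructor
  · refine fun hfp => isCompact_preimage_of_norm_control hFc hfp fun C => ⟨C + 1, fun x hx => ?_⟩
    exact (norm_le_norm_addTailSquares_add_one hkm hm (f x)).trans (by rw [hFf] at hx; simpa using hx)
  · refine fun hFp => isCompact_preimage_of_norm_control hf hFp fun C => ⟨C + k * C ^ 2, fun x hx => ?_⟩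
    rw [hFf]
    exact (norm_addTailSquares_le hkm (f x)).trans (by gcongr)

theorem stmt12 {m k : ℕ} (hm : 0 < m) (hkm : m ≤ k)
    (f : (Fin m → ℝ) → (Fin k → ℝ))
    (hpoly : ∃ p : Fin k → MvPolynomial (Fin m) ℝ,
      ∀ x j, f x j = MvPolynomial.eval x (p j))
    (hf0 : f 0 = 0)
    (hDf : Function.Bijective
      (fun v : Fin m → ℝ => fun i : Fin m => fderiv ℝ f 0 v (Fin.castLE hkm i)))
    (F : (Fin m → ℝ) → (Fin m → ℝ))
    (hF : ∀ x (i : Fin m), F x i =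
      if (i : ℕ) + 1 < m then f x (Fin.castLE hkm i)
      else f x (Fin.castLE hkm i) +
        ∑ j : Fin k, (if m ≤ (j : ℕ) + 1 then (f x j) ^ 2 else 0)) :
    (∀ K : Set (Fin k → ℝ), IsCompact K → IsCompact (f ⁻¹' K)) ↔
    (∀ K : Set (Fin m → ℝ), IsCompact K → IsCompact (F ⁻¹' K)) :=
  stmt12_general hm hkm f hpoly F hF
end

section
/- Let A be an m×m real matrix. The map F_A(x) = x + (Ax)^3 is proper if and only if the restriction of F̂_A(x) = x + A(x^3) to Im(A) is proper. -/
/-!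
Write `F x = x + c (T x)` and `G y = y + T (c y)` for a linear map `T` and a continuous map `c`
(here `T = A` and `c` the coordinatewise cube). Two identities link them: `T (F x) = G (T x)`, and
`F (x + w) = F x + w` for `w ∈ ker T`.

If `G` is proper on `range T` and `F x ∈ K`, then `T x` lies in the compact set
`{y ∈ range T | G y ∈ T '' K}`, so `x = F x - c (T x)` ranges over a compact set.

Conversely, fix a complement `p` of `ker T`; the map `T` is injective on `p`, so
`L = p ∩ T⁻¹' K` is compact. Given `y = T x ∈ range T` with `G y ∈ K`, shift `x` along `ker T`
so that `F x` lands in `p`: then `F x ∈ L`, and `y` lies in the compact set `T '' (F⁻¹' L)`.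
-/

open Filter Matrix

section

variable {𝕜 E F : Type*} [NontriviallyNormedField 𝕜] [CompleteSpace 𝕜]
  [NormedAddCommGroup E] [NormedSpace 𝕜 E] [FiniteDimensional 𝕜 E]
  [NormedAddCommGroup F] [NormedSpace 𝕜 F]

theorem LinearMap.isCompact_inter_preimage_of_disjoint_ker (T : E →ₗ[𝕜] F)
    {p : Submodule 𝕜 E} (hp : Disjoint p (LinearMap.ker T)) {K : Set F} (hK : IsCompact K) :
    IsCompact ((p : Set E) ∩ T ⁻¹' K) := by
  have hinj : LinearMap.ker (T.domRestrict p) = ⊥ :=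
    LinearMap.ker_eq_bot.2 (LinearMap.injective_domRestrict_iff.2 hp)
  have hL : IsCompact (T.domRestrict p ⁻¹' K) :=
    (LinearMap.isClosedEmbedding_of_injective hinj).isCompact_preimage hK
  rw [← Subtype.image_preimage_coe]
  exact hL.image continuous_subtype_val

end

section

variable {𝕜 E : Type*} [NontriviallyNormedField 𝕜] [CompleteSpace 𝕜]
  [NormedAddCommGroup E] [NormedSpace 𝕜 E] [FiniteDimensional 𝕜 E]
  (T : E →ₗ[𝕜] E) {c : E → E}

theorem isCompact_preimage_add_comp_of_isCompact_range_inter (hc : Continuous c)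
    (hG : ∀ K : Set E, IsCompact K →
      IsCompact {y | y ∈ LinearMap.range T ∧ y + T (c y) ∈ K})
    {K : Set E} (hK : IsCompact K) :
    IsCompact ((fun x => x + c (T x)) ⁻¹' K) := by
  have hT : Continuous T := T.continuous_of_finiteDimensional
  have hS := hG (T '' K) (hK.image hT)
  refine ((hK.prod hS).image (f := fun q : E × E => q.1 - c q.2) (by fun_prop))
    |>.of_isClosed_subset (hK.isClosed.preimage (by fun_prop)) fun x hx => ?_
  have hTF : T x + T (c (T x)) ∈ T '' K := ⟨_, hx, map_add T _ _⟩
  exact ⟨(x + c (T x), T x), ⟨hx, ⟨x, rfl⟩, hTF⟩, add_sub_cancel_right x _⟩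

theorem isCompact_range_inter_of_isCompact_preimage_add_comp (hc : Continuous c)
    (hF : ∀ K : Set E, IsCompact K → IsCompact ((fun x => x + c (T x)) ⁻¹' K))
    {K : Set E} (hK : IsCompact K) :
    IsCompact {y | y ∈ LinearMap.range T ∧ y + T (c y) ∈ K} := by
  have hT : Continuous T := T.continuous_of_finiteDimensional
  obtain ⟨p, hp⟩ := (LinearMap.ker T).exists_isCompl
  have hL := T.isCompact_inter_preimage_of_disjoint_ker hp.symm.disjoint hK
  refine ((hF _ hL).image hT).of_isClosed_subset
    ((LinearMap.range T).closed_of_finiteDimensional.inter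
      (hK.isClosed.preimage (by fun_prop))) ?_
  rintro _ ⟨⟨x, rfl⟩, hx⟩
  have hdecomp : x + c (T x) ∈ LinearMap.ker T ⊔ p := hp.sup_eq_top ▸ Submodule.mem_top
  obtain ⟨k, hk, q, hq, hkq⟩ := Submodule.mem_sup.1 hdecomp
  replace hkq : q = x + c (T x) - k := eq_sub_of_add_eq' hkq
  have hTk : T k = 0 := hk
  have hTshift : T (x - k) = T x := by rw [map_sub, hTk, sub_zero]
  have hFshift : x - k + c (T (x - k)) = q := by
    rw [hTshift, hkq]
    abel
  refine ⟨x - k, ?_, hTshift⟩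
  show x - k + c (T (x - k)) ∈ (p : Set E) ∩ T ⁻¹' K
  have hTq : T q = T x + T (c (T x)) := by rw [hkq, map_sub, hTk, sub_zero, map_add]
  rw [hFshift]
  exact ⟨hq, by rwa [Set.mem_preimage, hTq]⟩

end

theorem stmt19 {m : ℕ} (A : Matrix (Fin m) (Fin m) ℝ) :
    (∀ K : Set (Fin m → ℝ), IsCompact K →
        IsCompact ((fun x => x + fun i => (A.mulVec x i) ^ 3) ⁻¹' K)) ↔
    (∀ K : Set (Fin m → ℝ), IsCompact K →
        IsCompact {x : Fin m → ℝ | x ∈ LinearMap.range A.mulVecLin ∧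
          (x + A.mulVec fun i => (x i) ^ 3) ∈ K}) := by
  have hcube : Continuous fun x : Fin m → ℝ => fun i => x i ^ 3 := by fun_prop
  exact ⟨fun hF _ => isCompact_range_inter_of_isCompact_preimage_add_comp A.mulVecLin hcube hF,
    fun hG _ => isCompact_preimage_add_comp_of_isCompact_range_inter A.mulVecLin hcube hG⟩
end
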